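/- Let D : ℝ × ℝ² → ℝ be twice continuously differentiable in a neighborhood of (t, r) with ∇D(t,r) ≠ 0; set N := ∇D(t,r)/‖∇D(t,r)‖, λ := −D′_t(t,r)/‖∇D(t,r)‖, and v_ρ := ⟨∇D′_t(t,r) + λ·D″(t,r)N, N⟩/‖∇D(t,r)‖. Then the function s ↦ −D′_t(t, r + s·N)/‖∇D(t, r + s·N)‖ is differentiable at s = 0 with derivative −v_ρ; in other words, the front velocity satisfies λ(t, r + N·ds) = λ − v_ρ·ds + o(ds). -/

import Mathlib

open Real Set
open scoped RealInnerProductSpace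
noncomputable section

/-- The plane ℝ². -/
abbrev Plane := EuclideanSpace ℝ (Fin 2)

/-- Spatial gradient ∇D of the field. -/
def sgrad (D : ℝ × Plane → ℝ) (t : ℝ) (r : Plane) : Plane :=
  gradient (fun p => D (t, p)) r

/-- Partial time derivative D′_t of the field. -/
def dT (D : ℝ × Plane → ℝ) (t : ℝ) (r : Plane) : ℝ :=
  deriv (fun s => D (s, r)) t

/-- Second partial time derivative D″_tt of the field. -/
def dTT (D : ℝ × Plane → ℝ) (t : ℝ) (r : Plane) : ℝ :=
  deriv (fun s => dT D s r) t

/-- Spatial gradient ∇D′_t of the partial time derivative. -/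
def sgradDt (D : ℝ × Plane → ℝ) (t : ℝ) (r : Plane) : Plane :=
  gradient (fun p => dT D t p) r

/-- Spatial Hessian D″ applied to a vector v. -/
def hess (D : ℝ × Plane → ℝ) (t : ℝ) (r : Plane) (v : Plane) : Plane :=
  fderiv ℝ (fun p => sgrad D t p) r v

/-- Clockwise rotation through π/2, i.e. R_{−π/2}. -/
def rotCW (v : Plane) : Plane := WithLp.toLp 2 ![v 1, -(v 0)]

/-- The unit normal N = ∇D/‖∇D‖ of the isoline. -/
def unitN (D : ℝ × Plane → ℝ) (t : ℝ) (r : Plane) : Plane :=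
  ‖sgrad D t r‖⁻¹ • sgrad D t r

/-- The unit tangent T = R_{−π/2} N of the isoline. -/
def unitT (D : ℝ × Plane → ℝ) (t : ℝ) (r : Plane) : Plane :=
  rotCW (unitN D t r)

/-- The density of isolines ρ = ‖∇D‖. -/
def rho (D : ℝ × Plane → ℝ) (t : ℝ) (r : Plane) : ℝ := ‖sgrad D t r‖

/-- The front velocity λ = −D′_t/‖∇D‖ of the isoline. -/
def lam (D : ℝ × Plane → ℝ) (t : ℝ) (r : Plane) : ℝ :=
  -(dT D t r) / ‖sgrad D t r‖

/-- The proportional growth rate v_ρ = ⟨∇D′_t + λD″N, N⟩/‖∇D‖ of the density ρ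
    along the moving isoline. -/
def vRho (D : ℝ × Plane → ℝ) (t : ℝ) (r : Plane) : ℝ :=
  ⟪sgradDt D t r + lam D t r • hess D t r (unitN D t r), unitN D t r⟫ / ‖sgrad D t r‖

/-- The angular velocity ω = −⟨∇D′_t + λD″N, T⟩/‖∇D‖ of rotation of the isoline. -/
def omg (D : ℝ × Plane → ℝ) (t : ℝ) (r : Plane) : ℝ :=
  -⟪sgradDt D t r + lam D t r • hess D t r (unitN D t r), unitT D t r⟫ / ‖sgrad D t r‖

/-- The front acceleration α of the isoline. -/
def alph (D : ℝ × Plane → ℝ) (t : ℝ) (r : Plane) : ℝ :=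
  -(dTT D t r + lam D t r * ⟪sgradDt D t r, unitN D t r⟫) / ‖sgrad D t r‖
    - lam D t r * vRho D t r

/-- The signed curvature κ = −⟨D″T, T⟩/‖∇D‖ of the isoline. -/
def kap (D : ℝ × Plane → ℝ) (t : ℝ) (r : Plane) : ℝ :=
  -⟪hess D t r (unitT D t r), unitT D t r⟫ / ‖sgrad D t r‖

/-- The proportional growth rate τ_ρ = ⟨D″N, T⟩/‖∇D‖ of the density ρ under
    tangential displacement. -/
def tauRho (D : ℝ × Plane → ℝ) (t : ℝ) (r : Plane) : ℝ :=
  ⟪hess D t r (unitN D t r), unitT D t r⟫ / ‖sgrad D t r‖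

/-- The proportional growth rate n_ρ = ⟨D″N, N⟩/‖∇D‖ of the density ρ under
    normal displacement. -/
def nRho (D : ℝ × Plane → ℝ) (t : ℝ) (r : Plane) : ℝ :=
  ⟪hess D t r (unitN D t r), unitN D t r⟫ / ‖sgrad D t r‖

/-- The angular velocity ω_∇ = −⟨∇D′_t, T⟩/‖∇D‖ of rotation of the gradient. -/
def omgGrad (D : ℝ × Plane → ℝ) (t : ℝ) (r : Plane) : ℝ :=
  -⟪sgradDt D t r, unitT D t r⟫ / ‖sgrad D t r‖

/-- The unit velocity-orientation vector e(θ) = (cos θ, sin θ). -/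
def eVec (θ : ℝ) : Plane := WithLp.toLp 2 ![Real.cos θ, Real.sin θ]

/-!
Along the normal line `s ↦ r + s • N` the numerator `-D′_t` of `λ` has derivative
`-⟪∇D′_t, N⟫`, and the denominator `‖∇D‖` has derivative `⟪∇D, D″N⟫ / ‖∇D‖ = ⟪D″N, N⟫`.
The quotient rule gives `-(⟪∇D′_t, N⟫ + λ ⟪D″N, N⟫) / ‖∇D‖ = -v_ρ`. Since `D′_t` is defined
pointwise through `deriv`, its spatial differentiability comes from identifying it near `r`
with `p ↦ ∂D(t, p)(1, 0)`, which is `C¹` because `D` is `C²`.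
-/

open Topology

theorem HasDerivAt.norm {F : Type*} [NormedAddCommGroup F] [InnerProductSpace ℝ F]
    {f : ℝ → F} {f' : F} {x : ℝ} (hf : HasDerivAt f f' x) (h0 : f x ≠ 0) :
    HasDerivAt (‖f ·‖) (⟪f x, f'⟫ / ‖f x‖) x := by
  have h := hf.norm_sq.sqrt (by positivity)
  simp only [Real.sqrt_sq (norm_nonneg _)] at h
  convert h using 1
  field_simp

theorem ContDiffAt.gradient {E : Type*} [NormedAddCommGroup E] [InnerProductSpace ℝ E]
    [CompleteSpace E] {f : E → ℝ} {x : E} {m n : WithTop ℕ∞} (hf : ContDiffAt ℝ n f x)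
    (hmn : m + 1 ≤ n) : ContDiffAt ℝ m (gradient f) x :=
  (InnerProductSpace.toDual ℝ E).symm.contDiff.comp_contDiffAt x (hf.fderiv_right hmn)

theorem deriv_comp_prodMk_left_eq_fderiv {E F : Type*} [NormedAddCommGroup E] [NormedSpace ℝ E]
    [NormedAddCommGroup F] [NormedSpace ℝ F] {D : ℝ × E → F} {t : ℝ} {p : E}
    (hD : DifferentiableAt ℝ D (t, p)) :
    deriv (fun s => D (s, p)) t = fderiv ℝ D (t, p) (1, 0) := by
  have hcurve : HasDerivAt (fun s : ℝ => (s, p)) ((1 : ℝ), (0 : E)) t :=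
    (hasDerivAt_id t).prodMk (hasDerivAt_const t p)
  exact (hD.hasFDerivAt.comp_hasDerivAt t hcurve).deriv

section Slices

variable {D : ℝ × Plane → ℝ} {t : ℝ} {r : Plane} {m n : WithTop ℕ∞}

theorem ContDiffAt.sgrad (hD : ContDiffAt ℝ n D (t, r)) (hmn : m + 1 ≤ n) :
    ContDiffAt ℝ m (sgrad D t) r :=
  (hD.comp r (contDiffAt_const.prodMk contDiffAt_id)).gradient hmn

theorem dT_eventuallyEq_fderiv (hD : ContDiffAt ℝ 1 D (t, r)) :
    dT D t =ᶠ[𝓝 r] fun p => fderiv ℝ D (t, p) (1, 0) := by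
  have hslice : ContinuousAt (fun p : Plane => (t, p)) r := by fun_prop
  filter_upwards [hslice.eventually (hD.eventually (by simp))] with p hp
  exact deriv_comp_prodMk_left_eq_fderiv (hp.differentiableAt one_ne_zero)

theorem ContDiffAt.dT (hD : ContDiffAt ℝ n D (t, r)) (hmn : m + 1 ≤ n) :
    ContDiffAt ℝ m (dT D t) r := by
  have hfderiv : ContDiffAt ℝ m (fun p => fderiv ℝ D (t, p) (1, 0)) r :=
    ((hD.fderiv_right hmn).comp r (contDiffAt_const.prodMk contDiffAt_id)).clm_apply
      contDiffAt_const
  exact hfderiv.congr_of_eventuallyEq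
    (dT_eventuallyEq_fderiv (hD.of_le (le_trans (by simp) hmn)))

end Slices

/-- under normal displacement the front velocity satisfies
`λ(t, r + N·ds) = λ − v_ρ·ds + o(ds)`, i.e. `s ↦ λ(t, r + s·N)` has derivative
`−v_ρ` at `s = 0`, where `v_ρ = ⟨∇D′_t + λ·D″N, N⟩/‖∇D‖`. -/
theorem front_velocity_normal_growth
    (D : ℝ × Plane → ℝ) (t : ℝ) (r : Plane)
    (hD : ContDiffAt ℝ 2 D (t, r)) (hgrad : sgrad D t r ≠ 0) :
    HasDerivAt (fun s : ℝ => lam D t (r + s • unitN D t r)) (-(vRho D t r)) 0 := by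
  set N := unitN D t r with hNdef
  have hρ : ‖sgrad D t r‖ ≠ 0 := norm_ne_zero_iff.mpr hgrad
  have h2 : (1 : WithTop ℕ∞) + 1 ≤ 2 := by norm_num
  have hdT : HasDerivAt (fun s : ℝ => dT D t (r + s • N)) ⟪sgradDt D t r, N⟫ 0 := by
    rw [sgradDt, inner_gradient_left]
    exact ((hD.dT h2).differentiableAt one_ne_zero).hasFDerivAt.hasLineDerivAt N
  have hsgrad : HasDerivAt (fun s : ℝ => sgrad D t (r + s • N)) (hess D t r N) 0 :=
    ((hD.sgrad h2).differentiableAt one_ne_zero).hasFDerivAt.hasLineDerivAt N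
  refine (hdT.fun_neg.fun_div (hsgrad.norm (by simpa using hgrad))
    (by simpa using hρ)).congr_deriv ?_
  simp only [zero_smul, add_zero]
  have hN : ⟪hess D t r N, N⟫ = ⟪sgrad D t r, hess D t r N⟫ / ‖sgrad D t r‖ := by
    rw [real_inner_comm]
    exact (real_inner_smul_left _ _ _).trans (inv_mul_eq_div _ _)
  rw [vRho, lam, ← hNdef, inner_add_left, real_inner_smul_left, hN]
  field_simp
  ring
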